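/- arXiv:0804.3070 — 6 statements merged into one kernel-verified Lean document; each statement's English description precedes it below -/
import Mathlib

section
/- Let d be a positive integer, let 2 ≤ k ≤ n be integers, J := [[0_d, −1_d],[1_d, 0_d]], and let Γ be a permutation-invariant real symmetric matrix on ℝ^{2d} ⊗ ℝ^k with Γ ≥ i(J ⊗ 1_k), with on-site block A (i.e. Γ_{(α,i),(β,i)} = A_{αβ}) and inter-site block B (i.e. Γ_{(α,i),(β,j)} = B_{αβ} for i ≠ j). Then there exists a permutation-invariant real symmetric matrix Γ' on ℝ^{2d} ⊗ ℝ^n with Γ' ≥ i(J ⊗ 1_n) whose principal sub-block on the first k sites equals Γ, if and only if A + (n−1)B ≥ iJ. -/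
open Kronecker Matrix
open scoped ComplexOrder

/-- `M ≥ iK`: the complex Hermitian matrix `M - iK` is positive semidefinite. -/
def GeqI {m : Type*} [Fintype m] [DecidableEq m] (M K : Matrix m m ℝ) : Prop :=
  (M.map Complex.ofReal - Complex.I • K.map Complex.ofReal).PosSemidef

/-- Permutation invariance of a matrix on `ℝ^{2d} ⊗ ℝᵐ`. -/
def PermInvariant {d m : ℕ}
    (Γ : Matrix ((Fin d ⊕ Fin d) × Fin m) ((Fin d ⊕ Fin d) × Fin m) ℝ) : Prop :=
  ∀ π : Equiv.Perm (Fin m),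
    ((1 : Matrix (Fin d ⊕ Fin d) (Fin d ⊕ Fin d) ℝ) ⊗ₖ π.permMatrix ℝ) * Γ *
      ((1 : Matrix (Fin d ⊕ Fin d) (Fin d ⊕ Fin d) ℝ) ⊗ₖ π.permMatrix ℝ)ᵀ = Γ

/-!
Permutation invariance forces a matrix on `m` sites to be `E_m(A, B)`, with `A` on the diagonal
blocks and `B` off the diagonal. With `P` the orthogonal projection of `ℂᵐ` onto the constant
vectors, `E_m(A, B) - iJ ⊗ 1 = (A - B - iJ) ⊗ (1 - P) + (A + (m - 1)B - iJ) ⊗ P`, and a sum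
`X ⊗ (1 - P) + Y ⊗ P` is positive semidefinite iff `X` and `Y` are (compress by `1 ⊗ P` and
`1 ⊗ (1 - P)`). So for `m ≥ 2` the condition `E_m(A, B) ≥ iJ ⊗ 1` splits into `A - B ≥ iJ` and
`A + (m - 1)B ≥ iJ`. The first condition does not depend on `m` and holds since `Γ = E_k(A, B)`;
as every permutation-invariant extension of `Γ` is `E_n(A, B)`, an extension exists iff the second
condition holds for `m = n`.
-/

lemma Equiv.Perm.exists_apply_eq_and_apply_eq {α : Type*} [DecidableEq α] {i j i' j' : α}
    (hij : i ≠ j) (hij' : i' ≠ j') : ∃ σ : Equiv.Perm α, σ i = i' ∧ σ j = j' := by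
  have hne : i' ≠ swap i i' j := by
    simpa using (swap i i').injective.ne hij
  exact ⟨swap (swap i i' j) j' * swap i i', by simp [swap_apply_of_ne_of_ne hne hij'], by simp⟩

namespace Matrix

section Kronecker

variable {V ι 𝕜 : Type*} [Fintype V] [Fintype ι] [RCLike 𝕜]

lemma posSemidef_kronecker_iff_left {X : Matrix V V 𝕜} {Y : Matrix ι ι 𝕜} (hY : Y.PosSemidef)
    {i : ι} (hi : 0 < Y i i) : (X ⊗ₖ Y).PosSemidef ↔ X.PosSemidef := by
  refine ⟨fun h => ?_, fun hX => hX.kronecker hY⟩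
  have hsub : (X ⊗ₖ Y).submatrix (·, i) (·, i) = Y i i • X := by
    ext α β
    simp [mul_comm]
  have := (h.submatrix (·, i)).smul (inv_nonneg.mpr hi.le)
  rwa [hsub, smul_smul, inv_mul_cancel₀ hi.ne', one_smul] at this

variable [DecidableEq V] [DecidableEq ι]

lemma posSemidef_kronecker_add_iff {X Y : Matrix V V 𝕜} {p : Matrix ι ι 𝕜}
    (hp : IsStarProjection p) :
    (X ⊗ₖ (1 - p) + Y ⊗ₖ p).PosSemidef ↔
      (X ⊗ₖ (1 - p)).PosSemidef ∧ (Y ⊗ₖ p).PosSemidef := by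
  have compress : ∀ q : Matrix ι ι 𝕜, IsStarProjection q →
      ((1 : Matrix V V 𝕜) ⊗ₖ q)ᴴ * (X ⊗ₖ (1 - p) + Y ⊗ₖ p) * (1 ⊗ₖ q) =
        X ⊗ₖ (q * (1 - p) * q) + Y ⊗ₖ (q * p * q) := by
    intro q hq
    rw [conjTranspose_kronecker, conjTranspose_one, ← star_eq_conjTranspose,
      hq.isSelfAdjoint.star_eq, mul_add, add_mul, ← mul_kronecker_mul, ← mul_kronecker_mul,
      ← mul_kronecker_mul, ← mul_kronecker_mul, one_mul, mul_one, one_mul, mul_one]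
  refine ⟨fun h => ⟨?_, ?_⟩, fun h => h.1.add h.2⟩
  · have := h.conjTranspose_mul_mul_same ((1 : Matrix V V 𝕜) ⊗ₖ (1 - p))
    rwa [compress _ hp.one_sub, hp.one_sub.isIdempotentElem.eq, hp.one_sub.isIdempotentElem.eq,
      hp.one_sub_mul_self, zero_mul, kronecker_zero, add_zero] at this
  · have := h.conjTranspose_mul_mul_same ((1 : Matrix V V 𝕜) ⊗ₖ p)
    rwa [compress _ hp, hp.mul_one_sub_self, zero_mul, kronecker_zero, zero_add,
      hp.isIdempotentElem.eq, hp.isIdempotentElem.eq] at this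

end Kronecker

section MeanProj

variable (ι 𝕜 : Type*) [Fintype ι] [RCLike 𝕜]

def meanProj : Matrix ι ι 𝕜 :=
  (Fintype.card ι : 𝕜)⁻¹ • of fun _ _ => 1

variable {ι 𝕜}

lemma meanProj_apply (i j : ι) : meanProj ι 𝕜 i j = (((Fintype.card ι : ℝ)⁻¹ : ℝ) : 𝕜) := by
  simp [meanProj]

lemma isStarProjection_meanProj [DecidableEq ι] [Nonempty ι] :
    IsStarProjection (meanProj ι 𝕜) := by
  constructor
  · ext i j
    simp [meanProj, mul_apply]
  · ext i j
    simp [meanProj]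

end MeanProj

section Exchangeable

variable {V R : Type*} (ι : Type*) [DecidableEq ι]

def exchangeableMatrix (A B : Matrix V V R) : Matrix (V × ι) (V × ι) R :=
  of fun p q => if p.2 = q.2 then A p.1 q.1 else B p.1 q.1

variable {ι}

@[simp]
lemma exchangeableMatrix_apply (A B : Matrix V V R) (α β : V) (i j : ι) :
    exchangeableMatrix ι A B (α, i) (β, j) = if i = j then A α β else B α β := rfl

lemma eq_exchangeableMatrix_of_apply {M : Matrix (V × ι) (V × ι) R} {A B : Matrix V V R}
    (hA : ∀ α β i, M (α, i) (β, i) = A α β)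
    (hB : ∀ α β i j, i ≠ j → M (α, i) (β, j) = B α β) :
    M = exchangeableMatrix ι A B := by
  ext ⟨α, i⟩ ⟨β, j⟩
  by_cases h : i = j
  · subst h
    simp [hA]
  · simp [h, hB α β i j h]

lemma isSymm_exchangeableMatrix_iff [Nontrivial ι] {A B : Matrix V V R} :
    (exchangeableMatrix ι A B).IsSymm ↔ A.IsSymm ∧ B.IsSymm := by
  obtain ⟨i, j, hij⟩ := exists_pair_ne ι
  refine ⟨fun h => ⟨?_, ?_⟩, fun ⟨hA, hB⟩ => ?_⟩
  · ext α β
    simpa using h.apply (α, i) (β, i)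
  · ext α β
    simpa [hij, hij.symm] using h.apply (α, j) (β, i)
  · ext ⟨α, i⟩ ⟨β, j⟩
    simp [eq_comm (a := i), hA.apply, hB.apply]

lemma exchangeableMatrix_eq_kronecker {𝕜 : Type*} [RCLike 𝕜] [Fintype ι] [Nonempty ι]
    (A B : Matrix V V 𝕜) :
    exchangeableMatrix ι A B = (A - B) ⊗ₖ (1 - meanProj ι 𝕜) +
      (A + ((Fintype.card ι : 𝕜) - 1) • B) ⊗ₖ meanProj ι 𝕜 := by
  ext ⟨α, i⟩ ⟨β, j⟩
  by_cases h : i = j <;>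
  · simp [h, meanProj]
    field_simp
    ring

open scoped MatrixOrder in
theorem posSemidef_exchangeableMatrix_iff {𝕜 : Type*} [RCLike 𝕜] [Fintype V] [DecidableEq V]
    [Fintype ι] [Nontrivial ι] {A B : Matrix V V 𝕜} :
    (exchangeableMatrix ι A B).PosSemidef ↔
      (A - B).PosSemidef ∧ (A + ((Fintype.card ι : 𝕜) - 1) • B).PosSemidef := by
  obtain ⟨i⟩ := (inferInstance : Nonempty ι)
  have hp : IsStarProjection (meanProj ι 𝕜) := isStarProjection_meanProj
  have hdiag : 0 < meanProj ι 𝕜 i i := by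
    rw [meanProj_apply, RCLike.ofReal_pos]
    positivity
  have hdiag' : 0 < (1 - meanProj ι 𝕜) i i := by
    rw [sub_apply, one_apply_eq, meanProj_apply, ← RCLike.ofReal_one, ← RCLike.ofReal_sub,
      RCLike.ofReal_pos, sub_pos]
    exact inv_lt_one_of_one_lt₀ (by exact_mod_cast Fintype.one_lt_card)
  rw [exchangeableMatrix_eq_kronecker, posSemidef_kronecker_add_iff hp,
    posSemidef_kronecker_iff_left (nonneg_iff_posSemidef.mp hp.one_sub.nonneg) hdiag',
    posSemidef_kronecker_iff_left (nonneg_iff_posSemidef.mp hp.nonneg) hdiag]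

theorem geqI_exchangeableMatrix_iff [Fintype V] [DecidableEq V] [Fintype ι] [Nontrivial ι]
    (A B J : Matrix V V ℝ) :
    GeqI (exchangeableMatrix ι A B) (J ⊗ₖ (1 : Matrix ι ι ℝ)) ↔
      GeqI (A - B) J ∧ GeqI (A + ((Fintype.card ι : ℝ) - 1) • B) J := by
  have hmap : (exchangeableMatrix ι A B).map Complex.ofReal -
      Complex.I • (J ⊗ₖ (1 : Matrix ι ι ℝ)).map Complex.ofReal =
      exchangeableMatrix ι (A.map Complex.ofReal - Complex.I • J.map Complex.ofReal)
        (B.map Complex.ofReal) := by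
    ext ⟨α, i⟩ ⟨β, j⟩
    by_cases h : i = j <;> simp [h]
  rw [GeqI, GeqI, GeqI, hmap, posSemidef_exchangeableMatrix_iff]
  congr! 2 <;> ext <;> simp <;> ring

end Exchangeable

lemma kronecker_permMatrix_mul_mul_transpose_apply {V ι R : Type*} [Fintype V] [DecidableEq V]
    [Fintype ι] [DecidableEq ι] [CommSemiring R] (M : Matrix (V × ι) (V × ι) R)
    (σ : Equiv.Perm ι) (α β : V) (i j : ι) :
    (((1 : Matrix V V R) ⊗ₖ σ.permMatrix R) * M * ((1 : Matrix V V R) ⊗ₖ σ.permMatrix R)ᵀ)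
      (α, i) (β, j) = M (α, σ i) (β, σ j) := by
  simp [Matrix.mul_apply, Fintype.sum_prod_type, Equiv.Perm.permMatrix,
    PEquiv.toMatrix_apply, one_apply, mul_comm]

end Matrix

section PermInvariant

variable {d m : ℕ}

lemma PermInvariant.apply_perm {Γ : Matrix ((Fin d ⊕ Fin d) × Fin m) ((Fin d ⊕ Fin d) × Fin m) ℝ}
    (h : PermInvariant Γ) (σ : Equiv.Perm (Fin m)) (α β : Fin d ⊕ Fin d) (i j : Fin m) :
    Γ (α, σ i) (β, σ j) = Γ (α, i) (β, j) := by
  have := congr_fun₂ (h σ) (α, i) (β, j)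
  rwa [kronecker_permMatrix_mul_mul_transpose_apply] at this

lemma PermInvariant.eq_exchangeableMatrix
    {Γ : Matrix ((Fin d ⊕ Fin d) × Fin m) ((Fin d ⊕ Fin d) × Fin m) ℝ} (h : PermInvariant Γ)
    {i j : Fin m} (hij : i ≠ j) {A B : Matrix (Fin d ⊕ Fin d) (Fin d ⊕ Fin d) ℝ}
    (hA : ∀ α β, Γ (α, i) (β, i) = A α β) (hB : ∀ α β, Γ (α, i) (β, j) = B α β) :
    Γ = exchangeableMatrix (Fin m) A B := by
  refine eq_exchangeableMatrix_of_apply (fun α β i' => ?_) (fun α β i' j' hij' => ?_)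
  · rw [← hA, ← h.apply_perm (Equiv.swap i i') α β i i, Equiv.swap_apply_left]
  · obtain ⟨σ, rfl, rfl⟩ := Equiv.Perm.exists_apply_eq_and_apply_eq hij hij'
    rw [h.apply_perm, hB]

lemma permInvariant_exchangeableMatrix (A B : Matrix (Fin d ⊕ Fin d) (Fin d ⊕ Fin d) ℝ) :
    PermInvariant (exchangeableMatrix (Fin m) A B) := by
  intro σ
  ext ⟨α, i⟩ ⟨β, j⟩
  simp [kronecker_permMatrix_mul_mul_transpose_apply, σ.injective.eq_iff]

end PermInvariant

theorem exchangeable_CM_iff_general (d k n : ℕ) (hk : 2 ≤ k) (hkn : k ≤ n)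
    (J : Matrix (Fin d ⊕ Fin d) (Fin d ⊕ Fin d) ℝ)
    (Γ : Matrix ((Fin d ⊕ Fin d) × Fin k) ((Fin d ⊕ Fin d) × Fin k) ℝ)
    (hΓsymm : Γ.IsSymm)
    (hΓCM : GeqI Γ (J ⊗ₖ (1 : Matrix (Fin k) (Fin k) ℝ)))
    (A B : Matrix (Fin d ⊕ Fin d) (Fin d ⊕ Fin d) ℝ)
    (hA : ∀ (α β : Fin d ⊕ Fin d) (i : Fin k), Γ (α, i) (β, i) = A α β)
    (hB : ∀ (α β : Fin d ⊕ Fin d) (i j : Fin k), i ≠ j → Γ (α, i) (β, j) = B α β) :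
    (∃ Γ' : Matrix ((Fin d ⊕ Fin d) × Fin n) ((Fin d ⊕ Fin d) × Fin n) ℝ,
      Γ'.IsSymm ∧ PermInvariant Γ' ∧
      GeqI Γ' (J ⊗ₖ (1 : Matrix (Fin n) (Fin n) ℝ)) ∧
      ∀ (α β : Fin d ⊕ Fin d) (i j : Fin k),
        Γ' (α, Fin.castLE hkn i) (β, Fin.castLE hkn j) = Γ (α, i) (β, j))
    ↔ GeqI (A + ((n : ℝ) - 1) • B) J := by
  have : Nontrivial (Fin k) := Fin.nontrivial_iff_two_le.mpr hk
  have : Nontrivial (Fin n) := Fin.nontrivial_iff_two_le.mpr (hk.trans hkn)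
  obtain rfl : Γ = exchangeableMatrix (Fin k) A B := eq_exchangeableMatrix_of_apply hA hB
  have hCM_iff := geqI_exchangeableMatrix_iff (ι := Fin n) A B J
  rw [Fintype.card_fin] at hCM_iff
  constructor
  · rintro ⟨Γ', -, hperm, hCM, hext⟩
    obtain ⟨i, j, hij⟩ := exists_pair_ne (Fin k)
    obtain rfl : Γ' = exchangeableMatrix (Fin n) A B :=
      hperm.eq_exchangeableMatrix ((Fin.castLE_injective hkn).ne hij)
        (fun α β => by simp [hext]) (fun α β => by simp [hext, hij])
    exact (hCM_iff.mp hCM).2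
  · intro hD
    refine ⟨exchangeableMatrix (Fin n) A B,
      isSymm_exchangeableMatrix_iff.mpr (isSymm_exchangeableMatrix_iff.mp hΓsymm),
      permInvariant_exchangeableMatrix A B,
      hCM_iff.mpr ⟨((geqI_exchangeableMatrix_iff A B J).mp hΓCM).1, hD⟩,
      fun α β i j => by simp [Fin.castLE_inj]⟩

/-- **Exchangeable CMs.** A permutation-invariant covariance matrix `Γ`
on `k` sites with on-site block `A` and inter-site block `B` extends to a
permutation-invariant covariance matrix `Γ'` on `n ≥ k` sites if and only if
`A + (n-1)B ≥ iJ`. -/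
theorem exchangeable_CM_iff (d k n : ℕ) (hd : 0 < d) (hk : 2 ≤ k) (hkn : k ≤ n)
    (J : Matrix (Fin d ⊕ Fin d) (Fin d ⊕ Fin d) ℝ)
    (hJ : J = Matrix.fromBlocks 0 (-1) 1 0)
    (Γ : Matrix ((Fin d ⊕ Fin d) × Fin k) ((Fin d ⊕ Fin d) × Fin k) ℝ)
    (hΓsymm : Γ.IsSymm) (hΓperm : PermInvariant Γ)
    (hΓCM : GeqI Γ (J ⊗ₖ (1 : Matrix (Fin k) (Fin k) ℝ)))
    (A B : Matrix (Fin d ⊕ Fin d) (Fin d ⊕ Fin d) ℝ)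
    (hA : ∀ (α β : Fin d ⊕ Fin d) (i : Fin k), Γ (α, i) (β, i) = A α β)
    (hB : ∀ (α β : Fin d ⊕ Fin d) (i j : Fin k), i ≠ j → Γ (α, i) (β, j) = B α β) :
    (∃ Γ' : Matrix ((Fin d ⊕ Fin d) × Fin n) ((Fin d ⊕ Fin d) × Fin n) ℝ,
      Γ'.IsSymm ∧ PermInvariant Γ' ∧
      GeqI Γ' (J ⊗ₖ (1 : Matrix (Fin n) (Fin n) ℝ)) ∧
      ∀ (α β : Fin d ⊕ Fin d) (i j : Fin k),
        Γ' (α, Fin.castLE hkn i) (β, Fin.castLE hkn j) = Γ (α, i) (β, j))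
    ↔ GeqI (A + ((n : ℝ) - 1) • B) J :=
  exchangeable_CM_iff_general d k n hk hkn J Γ hΓsymm hΓCM A B hA hB
end

section
/- Let d be a positive integer, k ≥ 2 an integer, J := [[0_d, −1_d],[1_d, 0_d]], and let A, B be 2d×2d real symmetric matrices with A − B ≥ iJ and A + (k−1)B ≥ iJ (so that the permutation-invariant matrix on k sites with blocks A, B is a covariance matrix). Set E := A + (k−1)B and F := A − B. Then A + (n−1)B ≥ iJ holds for every integer n ≥ k if and only if E ≥ F in the Loewner order (equivalently, B is positive semidefinite). -/
/-!
Since `A + (n - 1) B - iJ = (F - iJ) + n B` with `F - iJ ≥ 0`, the extension condition holds for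
every `n` as soon as `B ≥ 0`. Conversely, if it holds for all large `n`, then for each vector `x`
the quadratic form `x* (F - iJ) x + n x* B x` stays nonnegative as `n → ∞`, forcing `x* B x ≥ 0`.
Finally `E - F = k B` with `k > 0`.
-/

open Matrix
open scoped ComplexOrder

theorem nonneg_of_forall_le_add_nat_mul_nonneg {K : Type*} [Field K] [LinearOrder K]
    [IsStrictOrderedRing K] [Archimedean K] {a b : K} {k : ℕ}
    (h : ∀ m : ℕ, k ≤ m → 0 ≤ a + m * b) : 0 ≤ b := by
  by_contra! hb
  obtain ⟨N, hN⟩ := exists_nat_gt (a / -b)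
  rw [div_lt_iff₀ (neg_pos.2 hb)] at hN
  have hN_le : (N : K) ≤ max k N := by exact_mod_cast le_max_right k N
  nlinarith [h (max k N) (le_max_left k N)]

namespace Matrix

theorem posSemidef_smul_iff {n : Type*} {M : Matrix n n ℝ} {c : ℝ} (hc : 0 < c) :
    (c • M).PosSemidef ↔ M.PosSemidef :=
  ⟨fun h => by simpa [hc.ne'] using h.smul (inv_nonneg.2 hc.le), fun h => h.smul hc.le⟩

variable {n : Type*} [Fintype n]

theorem PosSemidef.of_forall_le_add_nsmul {𝕜 : Type*} [RCLike 𝕜] {C M : Matrix n n 𝕜} {k : ℕ}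
    (h : ∀ m : ℕ, k ≤ m → (C + m • M).PosSemidef) : M.PosSemidef := by
  have hM : M.IsHermitian := by
    have := (h (k + 1) k.le_succ).isHermitian.sub (h k le_rfl).isHermitian
    rwa [add_sub_add_left_eq_sub, succ_nsmul, add_sub_cancel_left] at this
  refine posSemidef_iff_dotProduct_mulVec.mpr ⟨hM, fun x => RCLike.nonneg_iff.mpr
    ⟨nonneg_of_forall_le_add_nat_mul_nonneg (a := RCLike.re (star x ⬝ᵥ C *ᵥ x)) (k := k)
      fun m hm => ?_, hM.im_star_dotProduct_mulVec_self x⟩⟩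
  have := (RCLike.nonneg_iff.mp ((h m hm).dotProduct_mulVec_nonneg x)).1
  rwa [add_mulVec, smul_mulVec, dotProduct_add, dotProduct_smul, map_add, map_nsmul,
    nsmul_eq_mul] at this

@[simp]
theorem posSemidef_map_ofReal_iff {M : Matrix n n ℝ} :
    (M.map Complex.ofReal).PosSemidef ↔ M.PosSemidef := by
  constructor
  · intro h
    refine posSemidef_iff_dotProduct_mulVec.mpr ⟨?_, fun x => ?_⟩
    · exact IsHermitian.ext fun i j => by simpa using h.isHermitian.apply i j
    · have hx := h.dotProduct_mulVec_nonneg (Complex.ofReal ∘ x)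
      have hform : star (Complex.ofReal ∘ x) ⬝ᵥ M.map Complex.ofReal *ᵥ (Complex.ofReal ∘ x) =
          ((star x ⬝ᵥ M *ᵥ x : ℝ) : ℂ) := by
        simp [dotProduct, mulVec]
      simpa [hform] using hx
  · intro h
    obtain ⟨m, v, rfl⟩ := posSemidef_iff_eq_sum_vecMulVec.mp h
    refine posSemidef_iff_eq_sum_vecMulVec.mpr ⟨m, fun i => Complex.ofReal ∘ v i, ?_⟩
    ext
    simp [vecMulVec_apply, Matrix.sum_apply]

end Matrix

theorem map_ofReal_add_sub_one_smul_sub_eq {m : Type*} (A B K : Matrix m m ℝ) (n : ℕ) :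
    (A + ((n : ℝ) - 1) • B).map Complex.ofReal - Complex.I • K.map Complex.ofReal =
      ((A - B).map Complex.ofReal - Complex.I • K.map Complex.ofReal) +
        n • B.map Complex.ofReal := by
  ext
  simp [-nsmul_eq_mul]
  ring

theorem forall_geqI_add_sub_one_smul_iff {m : Type*} [Fintype m] [DecidableEq m]
    {A B K : Matrix m m ℝ} (hF : GeqI (A - B) K) (k : ℕ) :
    (∀ n : ℕ, k ≤ n → GeqI (A + ((n : ℝ) - 1) • B) K) ↔ B.PosSemidef := by
  simp only [GeqI, map_ofReal_add_sub_one_smul_sub_eq]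
  refine ⟨fun h => posSemidef_map_ofReal_iff.mp (.of_forall_le_add_nsmul h), fun hB n _ => ?_⟩
  exact hF.add ((posSemidef_map_ofReal_iff.mpr hB).smul n.zero_le)

theorem infinitely_exchangeable_iff_general (d k : ℕ) (hk : 2 ≤ k)
    (J : Matrix (Fin d ⊕ Fin d) (Fin d ⊕ Fin d) ℝ)
    (A B : Matrix (Fin d ⊕ Fin d) (Fin d ⊕ Fin d) ℝ)
    (hF : GeqI (A - B) J)
    (E F : Matrix (Fin d ⊕ Fin d) (Fin d ⊕ Fin d) ℝ)
    (hEdef : E = A + ((k : ℝ) - 1) • B) (hFdef : F = A - B) :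
    ((∀ n : ℕ, k ≤ n → GeqI (A + ((n : ℝ) - 1) • B) J) ↔ (E - F).PosSemidef)
    ∧ ((∀ n : ℕ, k ≤ n → GeqI (A + ((n : ℝ) - 1) • B) J) ↔ B.PosSemidef) := by
  have hextend := forall_geqI_add_sub_one_smul_iff hF k
  have hEF : E - F = (k : ℝ) • B := by
    rw [hEdef, hFdef]
    module
  have hk_pos : (0 : ℝ) < k := by exact_mod_cast (by omega : 0 < k)
  exact ⟨by rw [hEF, posSemidef_smul_iff hk_pos]; exact hextend, hextend⟩

/-- For a permutation-invariant covariance matrix on `k ≥ 2` sites with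
blocks `A, B` (so `F = A - B ≥ iJ` and `E = A + (k-1)B ≥ iJ`), the extension condition
`A + (n-1)B ≥ iJ` holds for every `n ≥ k` if and only if `E ≥ F` in the Loewner order,
equivalently `B` is positive semidefinite. -/
theorem infinitely_exchangeable_iff (d k : ℕ) (hd : 0 < d) (hk : 2 ≤ k)
    (J : Matrix (Fin d ⊕ Fin d) (Fin d ⊕ Fin d) ℝ)
    (hJ : J = Matrix.fromBlocks 0 (-1) 1 0)
    (A B : Matrix (Fin d ⊕ Fin d) (Fin d ⊕ Fin d) ℝ) (hA : A.IsSymm) (hB : B.IsSymm)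
    (hF : GeqI (A - B) J) (hE : GeqI (A + ((k : ℝ) - 1) • B) J)
    (E F : Matrix (Fin d ⊕ Fin d) (Fin d ⊕ Fin d) ℝ)
    (hEdef : E = A + ((k : ℝ) - 1) • B) (hFdef : F = A - B) :
    ((∀ n : ℕ, k ≤ n → GeqI (A + ((n : ℝ) - 1) • B) J) ↔ (E - F).PosSemidef)
    ∧ ((∀ n : ℕ, k ≤ n → GeqI (A + ((n : ℝ) - 1) • B) J) ↔ B.PosSemidef) :=
  infinitely_exchangeable_iff_general d k hk J A B hF E F hEdef hFdef
end

section
/- For s ≥ 1 and λ ≥ 1, let μ_ℓ(s) := 2(s−1)^ℓ/(s+1)^{ℓ+1} for ℓ ∈ ℕ (with the convention 0^0 = 1), and let ν(t) := (t−1)/(t+1). Then Σ_{ℓ=0}^∞ |μ_ℓ(s) − μ_ℓ(λs)| = 2 · sup_{ℓ ∈ ℕ} [ ν(λs)^{ℓ+1} − ν(s)^{ℓ+1} ]. -/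
/-- Eigenvalue sequence (in the Fock basis) of the single-mode thermal Gaussian state with
covariance matrix `s·1₂`: `μ_ℓ(s) = 2(s-1)^ℓ/(s+1)^{ℓ+1}` (with `0^0 = 1`). -/
noncomputable def thermalEigenvalue (s : ℝ) (ℓ : ℕ) : ℝ :=
  2 * (s - 1) ^ ℓ / (s + 1) ^ (ℓ + 1)

/-- `ν(t) = (t-1)/(t+1)`. -/
noncomputable def nuRatio (t : ℝ) : ℝ := (t - 1) / (t + 1)

open Filter Finset

lemma geom_l1_key (a b : ℝ) (ha : 0 ≤ a) (hab : a ≤ b) (hb : b < 1) :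
    ∑' ℓ : ℕ, |(1 - a) * a ^ ℓ - (1 - b) * b ^ ℓ|
      = 2 * ⨆ ℓ : ℕ, (b ^ (ℓ + 1) - a ^ (ℓ + 1)) := by
  have hb0 : 0 ≤ b := ha.trans hab
  have ha1 : a < 1 := lt_of_le_of_lt hab hb
  set f : ℕ → ℝ := fun ℓ => (1 - a) * a ^ ℓ - (1 - b) * b ^ ℓ with hf
  set g : ℕ → ℝ := fun n => b ^ n - a ^ n with hg
  have hfg : ∀ ℓ, f ℓ = g (ℓ + 1) - g ℓ := by
    intro ℓ; simp only [hf, hg, pow_succ]; ring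
  have hsa : Summable (fun ℓ : ℕ => (1 - a) * a ^ ℓ) :=
    (summable_geometric_of_lt_one ha ha1).mul_left _
  have hsb : Summable (fun ℓ : ℕ => (1 - b) * b ^ ℓ) :=
    (summable_geometric_of_lt_one hb0 hb).mul_left _
  have hsf : Summable f := hsa.sub hsb
  have hsabs : Summable (fun ℓ => |f ℓ|) := hsf.abs
  -- existence of a nonpositive value of f
  have hex : ∃ n, f n ≤ 0 := by
    by_contra h
    push_neg at h
    have hlt : ∑' ℓ : ℕ, (1 - b) * b ^ ℓ < ∑' ℓ : ℕ, (1 - a) * a ^ ℓ := by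
      refine Summable.tsum_lt_tsum (i := 0) (fun i => ?_) ?_ hsb hsa
      · have := h i; simp only [hf] at this; linarith
      · have := h 0; simp only [hf] at this; linarith
    have hta : ∑' ℓ : ℕ, (1 - a) * a ^ ℓ = 1 := by
      rw [tsum_mul_left, tsum_geometric_of_lt_one ha ha1]
      exact mul_inv_cancel₀ (by linarith)
    have htb : ∑' ℓ : ℕ, (1 - b) * b ^ ℓ = 1 := by
      rw [tsum_mul_left, tsum_geometric_of_lt_one hb0 hb]
      exact mul_inv_cancel₀ (by linarith)
    rw [hta, htb] at hlt; exact lt_irrefl 1 hlt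
  obtain ⟨n₀, h₀, hmin⟩ : ∃ n, f n ≤ 0 ∧ ∀ m < n, ¬ f m ≤ 0 :=
    ⟨Nat.find hex, Nat.find_spec hex, fun m hm => Nat.find_min hex hm⟩
  have hpos : ∀ m, m < n₀ → 0 < f m := by
    intro m hm
    have := hmin m hm
    push_neg at this; exact this
  have hneg : ∀ k, f (n₀ + k) ≤ 0 := by
    intro k
    induction k with
    | zero => simpa using h₀
    | succ k ih =>
      have h1 : (1 - a) * a ^ (n₀ + k) ≤ (1 - b) * b ^ (n₀ + k) := by
        simp only [hf] at ih; linarith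
      have h2 : (1 - a) * a ^ (n₀ + (k + 1)) ≤ (1 - b) * b ^ (n₀ + (k + 1)) := by
        have e1 : n₀ + (k + 1) = (n₀ + k) + 1 := by ring
        rw [e1, pow_succ, pow_succ]
        calc (1 - a) * (a ^ (n₀ + k) * a) = ((1 - a) * a ^ (n₀ + k)) * a := by ring
          _ ≤ ((1 - b) * b ^ (n₀ + k)) * a := by
              apply mul_le_mul_of_nonneg_right h1 ha
          _ ≤ ((1 - b) * b ^ (n₀ + k)) * b := by
              apply mul_le_mul_of_nonneg_left hab
              exact mul_nonneg (by linarith) (pow_nonneg hb0 _)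
          _ = (1 - b) * (b ^ (n₀ + k) * b) := by ring
      simp only [hf]; linarith
  -- g attains its max at n₀
  have hup : ∀ k n, n + k = n₀ → g n ≤ g n₀ := by
    intro k
    induction k with
    | zero => intro n hn; simp at hn; rw [hn]
    | succ k ih =>
      intro n hn
      have h1 : n < n₀ := by omega
      have h2 : g n ≤ g (n + 1) := by
        have := hpos n h1
        rw [hfg n] at this; linarith
      exact h2.trans (ih (n + 1) (by omega))
  have hdown : ∀ k, g (n₀ + k) ≤ g n₀ := by
    intro k
    induction k with
    | zero => simp
    | succ k ih =>
      have := hneg k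
      rw [hfg (n₀ + k)] at this
      have e : n₀ + (k + 1) = (n₀ + k) + 1 := by ring
      rw [e]; linarith
  have gmax : ∀ n, g n ≤ g n₀ := by
    intro n
    rcases le_or_gt n n₀ with h | h
    · exact hup (n₀ - n) n (by omega)
    · have := hdown (n - n₀)
      rwa [show n₀ + (n - n₀) = n by omega] at this
  have hgnn : ∀ n, 0 ≤ g n := by
    intro n
    simp only [hg]
    have := pow_le_pow_left₀ ha hab n
    linarith
  -- the sup
  have hbdd : BddAbove (Set.range fun ℓ : ℕ => b ^ (ℓ + 1) - a ^ (ℓ + 1)) := by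
    refine ⟨g n₀, ?_⟩
    rintro _ ⟨ℓ, rfl⟩
    exact gmax (ℓ + 1)
  have hSup : (⨆ ℓ : ℕ, (b ^ (ℓ + 1) - a ^ (ℓ + 1))) = g n₀ := by
    apply le_antisymm
    · exact ciSup_le fun ℓ => gmax (ℓ + 1)
    · cases n₀ with
      | zero =>
        have h0 : g 0 = 0 := by simp [hg]
        rw [h0]
        exact (hgnn 1).trans (le_ciSup hbdd 0)
      | succ k => exact le_ciSup hbdd k
  -- compute the tsum
  have hsplit : ∑' ℓ : ℕ, |f ℓ|
      = (∑ ℓ ∈ range n₀, |f ℓ|) + ∑' ℓ : ℕ, |f (ℓ + n₀)| :=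
    (Summable.sum_add_tsum_nat_add n₀ hsabs).symm
  have hsum1 : (∑ ℓ ∈ range n₀, |f ℓ|) = g n₀ := by
    have : (∑ ℓ ∈ range n₀, |f ℓ|) = ∑ ℓ ∈ range n₀, (g (ℓ + 1) - g ℓ) := by
      apply Finset.sum_congr rfl
      intro ℓ hℓ
      rw [Finset.mem_range] at hℓ
      rw [abs_of_pos (hpos ℓ hℓ), hfg]
    rw [this, Finset.sum_range_sub g n₀]
    simp [hg]
  have hsum2 : ∑' ℓ : ℕ, |f (ℓ + n₀)| = g n₀ := by
    have heq : ∀ ℓ : ℕ, |f (ℓ + n₀)| = g (ℓ + n₀) - g (ℓ + 1 + n₀) := by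
      intro ℓ
      have h1 : f (ℓ + n₀) ≤ 0 := by rw [add_comm]; exact hneg ℓ
      rw [abs_of_nonpos h1, hfg, show ℓ + 1 + n₀ = ℓ + n₀ + 1 from by omega]; ring
    have hsum : Summable (fun ℓ : ℕ => |f (ℓ + n₀)|) :=
      (summable_nat_add_iff n₀).mpr hsabs
    have htend : Tendsto (fun N : ℕ => ∑ ℓ ∈ range N, |f (ℓ + n₀)|) atTop (nhds (g n₀)) := by
      have hps : ∀ N : ℕ, (∑ ℓ ∈ range N, |f (ℓ + n₀)|) = g n₀ - g (N + n₀) := by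
        intro N
        have := Finset.sum_range_sub' (fun m => g (m + n₀)) N
        simp only [zero_add] at this
        rw [← this]
        exact Finset.sum_congr rfl fun ℓ _ => heq ℓ
      simp only [hps]
      have hgt : Tendsto g atTop (nhds 0) := by
        have hta : Tendsto (fun n : ℕ => a ^ n) atTop (nhds 0) :=
          tendsto_pow_atTop_nhds_zero_of_lt_one ha ha1
        have htb : Tendsto (fun n : ℕ => b ^ n) atTop (nhds 0) :=
          tendsto_pow_atTop_nhds_zero_of_lt_one hb0 hb
        have := htb.sub hta
        simpa [hg] using this
      have hshift : Tendsto (fun N : ℕ => g (N + n₀)) atTop (nhds 0) :=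
        hgt.comp (tendsto_add_atTop_nat n₀)
      have := tendsto_const_nhds (x := g n₀) (f := atTop (α := ℕ)) |>.sub hshift
      simpa using this
    exact (hsum.hasSum_iff_tendsto_nat.mpr htend).tsum_eq
  rw [hsplit, hsum1, hsum2, hSup]; ring

lemma thermal_eq (s : ℝ) (hs : 1 ≤ s) (ℓ : ℕ) :
    thermalEigenvalue s ℓ = (1 - nuRatio s) * nuRatio s ^ ℓ := by
  have h1 : (0:ℝ) < s + 1 := by linarith
  simp only [thermalEigenvalue, nuRatio, div_pow, pow_succ]
  field_simp
  ring

lemma nuRatio_nonneg {s : ℝ} (hs : 1 ≤ s) : 0 ≤ nuRatio s := by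
  have h1 : (0:ℝ) < s + 1 := by linarith
  exact div_nonneg (by linarith) h1.le

lemma nuRatio_lt_one {s : ℝ} (hs : 1 ≤ s) : nuRatio s < 1 := by
  have h1 : (0:ℝ) < s + 1 := by linarith
  rw [nuRatio, div_lt_one h1]; linarith

/-- For `s, λ ≥ 1`, the `ℓ¹`-distance between the geometric distributions
`μ_•(s)` and `μ_•(λs)` equals `2 · sup_ℓ [ν(λs)^{ℓ+1} - ν(s)^{ℓ+1}]`. -/
theorem thermal_trace_distance_eq_sup (s lam : ℝ) (hs : 1 ≤ s) (hlam : 1 ≤ lam) :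
    ∑' ℓ : ℕ, |thermalEigenvalue s ℓ - thermalEigenvalue (lam * s) ℓ|
      = 2 * ⨆ ℓ : ℕ, (nuRatio (lam * s) ^ (ℓ + 1) - nuRatio s ^ (ℓ + 1)) := by
  have hls : (1:ℝ) ≤ lam * s := one_le_mul_of_one_le_of_one_le hlam hs
  have hmono : nuRatio s ≤ nuRatio (lam * s) := by
    have h1 : (0:ℝ) < s + 1 := by linarith
    have h2 : (0:ℝ) < lam * s + 1 := by linarith
    rw [nuRatio, nuRatio, div_le_div_iff₀ h1 h2]
    nlinarith [mul_le_mul_of_nonneg_right hlam (by linarith : (0:ℝ) ≤ s)]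
  have key := geom_l1_key (nuRatio s) (nuRatio (lam * s)) (nuRatio_nonneg hs)
    hmono (nuRatio_lt_one hls)
  simp only [← thermal_eq s hs, ← thermal_eq (lam * s) hls] at key
  exact key
end

section
/- Let 1 ≤ k < n be integers and set λ := n/(n−k). Then for every s ≥ 1, with μ_ℓ(s) := 2(s−1)^ℓ/(s+1)^{ℓ+1} (convention 0^0 = 1), one has Σ_{ℓ=0}^∞ |μ_ℓ(s) − μ_ℓ(λs)| ≤ (n/k − 1/2)^{-1} = 2k/(2n−k). -/
open Finset

noncomputable def thermalRatio (t : ℝ) : ℝ := (t - 1) / (t + 1)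

section ThermalRatio

variable {t : ℝ}

lemma thermalEigenvalue_eq (ht : t + 1 ≠ 0) (ℓ : ℕ) :
    thermalEigenvalue t ℓ = (1 - thermalRatio t) * thermalRatio t ^ ℓ := by
  unfold thermalEigenvalue thermalRatio
  rw [div_pow]
  field_simp
  ring

lemma thermalRatio_nonneg (ht : 1 ≤ t) : 0 ≤ thermalRatio t :=
  div_nonneg (by linarith) (by linarith)

lemma thermalRatio_pos (ht : 1 < t) : 0 < thermalRatio t :=
  div_pos (by linarith) (by linarith)

lemma thermalRatio_lt_one (ht : 0 < t + 1) : thermalRatio t < 1 :=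
  (div_lt_one ht).2 (by linarith)

lemma thermalRatio_mul_sub {lam s : ℝ} (hs : s + 1 ≠ 0) (hls : lam * s + 1 ≠ 0)
    (hl : lam + 1 ≠ 0) :
    thermalRatio (lam * s) - thermalRatio s
      = thermalRatio lam * (1 - thermalRatio s * thermalRatio (lam * s)) := by
  unfold thermalRatio
  field_simp
  ring

end ThermalRatio

section PowSubPow

variable {p q : ℝ}

lemma pow_mul_pow_add_pow_mul_pow_le (hp₀ : 0 ≤ p) (hp₁ : p ≤ 1) (hq₀ : 0 ≤ q) (hq₁ : q ≤ 1)
    (i j : ℕ) : q ^ i * p ^ j + q ^ j * p ^ i ≤ (p * q) ^ i + (p * q) ^ j := by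
  wlog hij : i ≤ j generalizing i j
  · linarith [this j i (le_of_not_ge hij)]
  obtain ⟨d, rfl⟩ := Nat.exists_eq_add_of_le hij
  have hd : 0 ≤ (p * q) ^ i * ((1 - p ^ d) * (1 - q ^ d)) :=
    mul_nonneg (pow_nonneg (mul_nonneg hp₀ hq₀) i)
      (mul_nonneg (sub_nonneg.2 (pow_le_one₀ hp₀ hp₁)) (sub_nonneg.2 (pow_le_one₀ hq₀ hq₁)))
  linarith [show (p * q) ^ i + (p * q) ^ (i + d) - (q ^ i * p ^ (i + d) + q ^ (i + d) * p ^ i)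
      = (p * q) ^ i * ((1 - p ^ d) * (1 - q ^ d)) by ring]

lemma sum_pow_mul_pow_le_geom_sum (hp₀ : 0 ≤ p) (hp₁ : p ≤ 1) (hq₀ : 0 ≤ q) (hq₁ : q ≤ 1)
    (m : ℕ) : ∑ i ∈ range m, q ^ i * p ^ (m - 1 - i) ≤ ∑ i ∈ range m, (p * q) ^ i := by
  have reflect (f : ℕ → ℝ) : ∑ i ∈ range m, f (m - 1 - i) = ∑ i ∈ range m, f i :=
    sum_range_reflect f m
  have hpair := sum_le_sum fun i (_ : i ∈ range m) ↦
    pow_mul_pow_add_pow_mul_pow_le hp₀ hp₁ hq₀ hq₁ i (m - 1 - i)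
  rw [sum_add_distrib, sum_add_distrib, reflect (fun i ↦ (p * q) ^ i)] at hpair
  have hswap : ∑ i ∈ range m, q ^ (m - 1 - i) * p ^ i = ∑ i ∈ range m, q ^ i * p ^ (m - 1 - i) := by
    rw [← reflect]
    refine sum_congr rfl fun i hi ↦ ?_
    rw [Nat.sub_sub_self (Nat.le_sub_one_of_lt (mem_range.1 hi))]
  linarith

lemma pow_sub_pow_mul_one_sub_mul_le (hp : 0 ≤ p) (hpq : p ≤ q) (hq : q ≤ 1) (m : ℕ) :
    (q ^ m - p ^ m) * (1 - p * q) ≤ q - p := by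
  have hq₀ : 0 ≤ q := hp.trans hpq
  have hpq₁ : p * q ≤ 1 := mul_le_one₀ (hpq.trans hq) hq₀ hq
  calc (q ^ m - p ^ m) * (1 - p * q)
      = (∑ i ∈ range m, q ^ i * p ^ (m - 1 - i)) * (1 - p * q) * (q - p) := by
        rw [← geom_sum₂_mul]; ring
    _ ≤ (∑ i ∈ range m, (p * q) ^ i) * (1 - p * q) * (q - p) := by
        have := sum_pow_mul_pow_le_geom_sum hp (hpq.trans hq) hq₀ hq m
        gcongr
    _ = (1 - (p * q) ^ m) * (q - p) := by rw [mul_comm _ (1 - p * q), mul_neg_geom_sum]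
    _ ≤ q - p := by
        nlinarith [pow_nonneg (mul_nonneg hp hq₀) m]

end PowSubPow

section GeometricDistance

variable {p q : ℝ}

lemma sum_range_one_sub_mul_pow (r : ℝ) (m : ℕ) :
    ∑ ℓ ∈ range m, (1 - r) * r ^ ℓ = 1 - r ^ m := by
  rw [← mul_sum, mul_neg_geom_sum]

lemma hasSum_one_sub_mul_pow_add {r : ℝ} (hr₀ : 0 ≤ r) (hr₁ : r < 1) (m : ℕ) :
    HasSum (fun i ↦ (1 - r) * r ^ (i + m)) (r ^ m) := by
  have h := (hasSum_geometric_of_lt_one hr₀ hr₁).mul_left (r ^ m * (1 - r))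
  rw [mul_inv_cancel_right₀ (sub_pos.2 hr₁).ne'] at h
  rwa [show (fun i ↦ (1 - r) * r ^ (i + m)) = fun i ↦ r ^ m * (1 - r) * r ^ i from
    funext fun i ↦ by ring]

lemma exists_geometric_crossing (hp : 0 ≤ p) (hpq : p < q) (hq : q < 1) :
    ∃ m, (∀ ℓ < m, (1 - q) * q ^ ℓ ≤ (1 - p) * p ^ ℓ) ∧
      ∀ ℓ, m ≤ ℓ → (1 - p) * p ^ ℓ ≤ (1 - q) * q ^ ℓ := by
  have hq₀ : 0 < q := hp.trans_lt hpq
  have hex : ∃ ℓ : ℕ, (1 - p) * p ^ ℓ < (1 - q) * q ^ ℓ := by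
    obtain ⟨ℓ, hℓ⟩ := exists_pow_lt_of_lt_one (div_pos (sub_pos.2 hq) (sub_pos.2 (hpq.trans hq)))
      ((div_lt_one hq₀).2 hpq)
    rw [div_pow, div_lt_div_iff₀ (pow_pos hq₀ ℓ) (sub_pos.2 (hpq.trans hq))] at hℓ
    exact ⟨ℓ, by linarith⟩
  refine ⟨Nat.find hex, fun ℓ hℓ ↦ not_lt.1 (Nat.find_min hex hℓ), fun ℓ hℓ ↦ ?_⟩
  obtain ⟨i, rfl⟩ := Nat.exists_eq_add_of_le hℓ
  rw [pow_add, pow_add, ← mul_assoc, ← mul_assoc]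
  exact mul_le_mul (Nat.find_spec hex).le (pow_le_pow_left₀ hp hpq.le i) (pow_nonneg hp i)
    (mul_nonneg (sub_pos.2 hq).le (pow_nonneg hq₀.le _))

lemma exists_tsum_abs_geometric_sub_eq (hp : 0 ≤ p) (hpq : p < q) (hq : q < 1) :
    ∃ m : ℕ, ∑' ℓ, |(1 - p) * p ^ ℓ - (1 - q) * q ^ ℓ| = 2 * (q ^ m - p ^ m) := by
  obtain ⟨m, hbefore, hafter⟩ := exists_geometric_crossing hp hpq hq
  refine ⟨m, HasSum.tsum_eq ((hasSum_nat_add_iff' m).1 ?_)⟩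
  have hhead : ∑ ℓ ∈ range m, |(1 - p) * p ^ ℓ - (1 - q) * q ^ ℓ| = q ^ m - p ^ m := by
    rw [sum_congr rfl fun ℓ hℓ ↦ abs_of_nonneg (sub_nonneg.2 (hbefore ℓ (mem_range.1 hℓ))),
      sum_sub_distrib, sum_range_one_sub_mul_pow, sum_range_one_sub_mul_pow]
    ring
  have htail := (hasSum_one_sub_mul_pow_add (hp.trans hpq.le) hq m).sub
    (hasSum_one_sub_mul_pow_add hp (hpq.trans hq) m)
  rw [hhead, show 2 * (q ^ m - p ^ m) - (q ^ m - p ^ m) = q ^ m - p ^ m by ring]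
  convert htail using 2 with i
  rw [abs_sub_comm, abs_of_nonneg (sub_nonneg.2 (hafter _ (Nat.le_add_left m i)))]

lemma tsum_abs_geometric_sub_mul_le (hp : 0 ≤ p) (hpq : p < q) (hq : q < 1) :
    (∑' ℓ, |(1 - p) * p ^ ℓ - (1 - q) * q ^ ℓ|) * (1 - p * q) ≤ 2 * (q - p) := by
  obtain ⟨m, hm⟩ := exists_tsum_abs_geometric_sub_eq hp hpq hq
  rw [hm, mul_assoc]
  linarith [pow_sub_pow_mul_one_sub_mul_le hp hpq.le hq.le m]

end GeometricDistance

/-- **quantitative core of the single-mode Gaussian de Finetti theorem.**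
For `1 ≤ k < n` and `λ = n/(n-k)`, the trace-norm distance between the thermal states with
covariance matrices `s·1₂` and `λs·1₂` is at most `(n/k - 1/2)⁻¹ = 2k/(2n-k)`. -/
theorem single_mode_de_finetti_bound (k n : ℕ) (hk : 1 ≤ k) (hkn : k < n)
    (lam : ℝ) (hlam : lam = (n : ℝ) / ((n : ℝ) - k)) (s : ℝ) (hs : 1 ≤ s) :
    (∑' ℓ : ℕ, |thermalEigenvalue s ℓ - thermalEigenvalue (lam * s) ℓ|
        ≤ ((n : ℝ) / k - 1 / 2)⁻¹)
    ∧ ((n : ℝ) / k - 1 / 2)⁻¹ = 2 * k / (2 * n - k) := by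
  have hk₀ : (0 : ℝ) < k := by exact_mod_cast hk
  have hnk : (0 : ℝ) < n - k := sub_pos.2 (by exact_mod_cast hkn)
  have hbound : ((n : ℝ) / k - 1 / 2)⁻¹ = 2 * k / (2 * n - k) := by
    rw [show (n : ℝ) / k - 1 / 2 = (2 * n - k) / (2 * k) by field_simp, inv_div]
  refine ⟨?_, hbound⟩
  have hlam₁ : 1 < lam := by rw [hlam, one_lt_div hnk]; linarith
  have hratio : 2 * thermalRatio lam = ((n : ℝ) / k - 1 / 2)⁻¹ := by
    have h2nk : (2 * n - k : ℝ) ≠ 0 := by linarith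
    rw [hbound, hlam, thermalRatio]
    field_simp
    ring
  set p := thermalRatio s
  set q := thermalRatio (lam * s)
  have hp : 0 ≤ p := thermalRatio_nonneg hs
  have hq : q < 1 := thermalRatio_lt_one (by nlinarith)
  have hpq₁ : 0 < 1 - p * q := by nlinarith [thermalRatio_lt_one (t := s) (by linarith)]
  have hqp : q - p = thermalRatio lam * (1 - p * q) :=
    thermalRatio_mul_sub (by linarith) (by nlinarith) (by linarith)
  have hpq : p < q := sub_pos.1 (hqp ▸ mul_pos (thermalRatio_pos hlam₁) hpq₁)
  simp_rw [thermalEigenvalue_eq (show s + 1 ≠ 0 by linarith),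
    thermalEigenvalue_eq (show lam * s + 1 ≠ 0 by nlinarith)]
  rw [← hratio, ← mul_le_mul_iff_left₀ hpq₁, mul_assoc, ← hqp]
  exact tsum_abs_geometric_sub_mul_le hp hpq hq
end

section
/- Let d ≥ 1 and 1 ≤ k < n be integers and set λ := n/(n−k). Then for all s₁, …, s_d ≥ 1, with μ_ℓ(s) := 2(s−1)^ℓ/(s+1)^{ℓ+1} (convention 0^0 = 1), one has Σ_{α=1}^d Σ_{ℓ=0}^∞ μ_ℓ(s_α) · log( μ_ℓ(s_α)/μ_ℓ(λ s_α) ) ≤ d · log( (n − k/2)/(n − k) ). -/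
open Real

noncomputable def geomWeight (r : ℝ) (ℓ : ℕ) : ℝ :=
  (1 - r) * r ^ ℓ

section GeomWeight

variable {r t : ℝ}

lemma hasSum_geomWeight (hr₀ : 0 ≤ r) (hr₁ : r < 1) : HasSum (geomWeight r) 1 := by
  have h := (hasSum_geometric_of_lt_one hr₀ hr₁).mul_left (1 - r)
  rwa [mul_inv_cancel₀ (sub_ne_zero.2 hr₁.ne')] at h

lemma hasSum_coe_mul_geomWeight (hr₀ : 0 ≤ r) (hr₁ : r < 1) :
    HasSum (fun ℓ : ℕ => (ℓ : ℝ) * geomWeight r ℓ) (r / (1 - r)) := by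
  have hne : 1 - r ≠ 0 := sub_ne_zero.2 hr₁.ne'
  have h := (hasSum_coe_mul_geometric_of_norm_lt_one (by rwa [norm_of_nonneg hr₀])).mul_left (1 - r)
  rw [show (1 - r) * (r / (1 - r) ^ 2) = r / (1 - r) by field_simp] at h
  exact h.congr_fun fun ℓ => by rw [geomWeight]; ring

lemma geomWeight_mul_log_div_geomWeight (hr₀ : 0 ≤ r) (hr₁ : r < 1) (ht₀ : 0 < t) (ht₁ : t < 1)
    (ℓ : ℕ) :
    geomWeight r ℓ * log (geomWeight r ℓ / geomWeight t ℓ)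
      = log ((1 - r) / (1 - t)) * geomWeight r ℓ + log (r / t) * (ℓ * geomWeight r ℓ) := by
  rcases hr₀.eq_or_lt with rfl | hr₀
  · cases ℓ <;> simp [geomWeight]
  · have hratio : geomWeight r ℓ / geomWeight t ℓ = (1 - r) / (1 - t) * (r / t) ^ ℓ := by
      have : 1 - t ≠ 0 := sub_ne_zero.2 ht₁.ne'
      simp only [geomWeight, div_pow]
      field_simp
    rw [hratio, log_mul (div_pos (by linarith) (by linarith)).ne' (by positivity), log_pow]
    ring

theorem hasSum_geomWeight_mul_log_div_geomWeight (hr₀ : 0 ≤ r) (hr₁ : r < 1) (ht₀ : 0 < t)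
    (ht₁ : t < 1) :
    HasSum (fun ℓ => geomWeight r ℓ * log (geomWeight r ℓ / geomWeight t ℓ))
      (log ((1 - r) / (1 - t)) + r / (1 - r) * log (r / t)) := by
  simp_rw [geomWeight_mul_log_div_geomWeight hr₀ hr₁ ht₀ ht₁]
  have h := ((hasSum_geomWeight hr₀ hr₁).mul_left (log ((1 - r) / (1 - t)))).add
    ((hasSum_coe_mul_geomWeight hr₀ hr₁).mul_left (log (r / t)))
  rwa [mul_one, mul_comm (log (r / t))] at h

end GeomWeight

section Thermal

variable {s s' lam : ℝ}

lemma thermalEigenvalue_eq_geomWeight (hs : s + 1 ≠ 0) :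
    thermalEigenvalue s = geomWeight ((s - 1) / (s + 1)) := by
  ext ℓ
  simp only [thermalEigenvalue, geomWeight, div_pow]
  field_simp
  ring

theorem tsum_thermalEigenvalue_mul_log_div (hs : 1 ≤ s) (hs' : 1 < s') :
    ∑' ℓ, thermalEigenvalue s ℓ * log (thermalEigenvalue s ℓ / thermalEigenvalue s' ℓ)
      = log ((s' + 1) / (s + 1))
        + (s - 1) / 2 * log ((s - 1) * (s' + 1) / ((s + 1) * (s' - 1))) := by
  have hs₁ : s + 1 ≠ 0 := by linarith
  have hs'₁ : s' + 1 ≠ 0 := by linarith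
  have hlt : ∀ x : ℝ, 1 ≤ x → (x - 1) / (x + 1) < 1 := fun x hx => by
    rw [div_lt_one (by linarith)]
    linarith
  rw [thermalEigenvalue_eq_geomWeight hs₁, thermalEigenvalue_eq_geomWeight hs'₁,
    (hasSum_geomWeight_mul_log_div_geomWeight (by bound) (hlt s hs)
      (div_pos (by linarith) (by linarith)) (hlt s' hs'.le)).tsum_eq]
  congr 2
  · field_simp
    ring
  · field_simp
    ring
  · field_simp

lemma log_add_mul_log_le_log_add_one_div_two (hlam : 1 < lam) (hs : 1 ≤ s) :
    log ((lam * s + 1) / (s + 1))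
        + (s - 1) / 2 * log ((s - 1) * (lam * s + 1) / ((s + 1) * (lam * s - 1)))
      ≤ log ((lam + 1) / 2) := by
  rcases hs.eq_or_lt with rfl | hs
  · norm_num
  have hls : 0 < lam * s - 1 := by nlinarith
  have hA : log ((s - 1) * (lam * s + 1) / ((s + 1) * (lam * s - 1)))
      ≤ -2 * s * (lam - 1) / ((s + 1) * (lam * s - 1)) := by
    refine (log_le_sub_one_of_pos (by bound)).trans_eq ?_
    rw [div_sub_one (by positivity)]
    ring
  have hB : log ((lam * s + 1) / (s + 1)) - log ((lam + 1) / 2)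
      ≤ (lam - 1) * (s - 1) / ((s + 1) * (lam + 1)) := by
    rw [← log_div (by positivity) (by positivity)]
    refine (log_le_sub_one_of_pos (by positivity)).trans_eq ?_
    field_simp
    ring
  have hsum : -2 * s * (lam - 1) / ((s + 1) * (lam * s - 1)) * ((s - 1) / 2)
      + (lam - 1) * (s - 1) / ((s + 1) * (lam + 1)) ≤ 0 := by
    rw [div_mul_div_comm, div_add_div _ _ (by positivity) (by positivity)]
    refine div_nonpos_of_nonpos_of_nonneg ?_ (by positivity)
    nlinarith [mul_pos (sub_pos.2 hs) (sub_pos.2 hlam), mul_pos hls (sub_pos.2 hs)]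
  nlinarith [mul_le_mul_of_nonneg_right hA (by linarith : 0 ≤ (s - 1) / 2)]

theorem tsum_thermalEigenvalue_mul_log_div_mul_le (hlam : 1 ≤ lam) (hs : 1 ≤ s) :
    ∑' ℓ, thermalEigenvalue s ℓ * log (thermalEigenvalue s ℓ / thermalEigenvalue (lam * s) ℓ)
      ≤ log ((lam + 1) / 2) := by
  rcases hlam.eq_or_lt with rfl | hlam
  · norm_num
  rw [tsum_thermalEigenvalue_mul_log_div hs (by nlinarith)]
  exact log_add_mul_log_le_log_add_one_div_two hlam hs

end Thermal

theorem multimode_relative_entropy_de_finetti_general (d k n : ℕ) (hkn : k < n)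
    (lam : ℝ) (hlam : lam = (n : ℝ) / ((n : ℝ) - k))
    (s : Fin d → ℝ) (hs : ∀ α, 1 ≤ s α) :
    ∑ α : Fin d, ∑' ℓ : ℕ, thermalEigenvalue (s α) ℓ *
        Real.log (thermalEigenvalue (s α) ℓ / thermalEigenvalue (lam * s α) ℓ)
      ≤ (d : ℝ) * Real.log (((n : ℝ) - (k : ℝ) / 2) / ((n : ℝ) - k)) := by
  have hnk : (0 : ℝ) < n - k := sub_pos.2 (by exact_mod_cast hkn)
  have hlam₁ : 1 ≤ lam := by
    rw [hlam, le_div_iff₀ hnk]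
    linarith [(Nat.cast_nonneg k : (0 : ℝ) ≤ k)]
  have hrhs : ((n : ℝ) - (k : ℝ) / 2) / ((n : ℝ) - k) = (lam + 1) / 2 := by
    rw [hlam]
    field_simp
    ring
  rw [hrhs]
  calc _ ≤ ∑ _α : Fin d, log ((lam + 1) / 2) :=
        Finset.sum_le_sum fun α _ => tsum_thermalEigenvalue_mul_log_div_mul_le hlam₁ (hs α)
    _ = d * log ((lam + 1) / 2) := by simp

/-- **relative-entropy multi-mode Gaussian de Finetti bound.**
For `d ≥ 1`, `1 ≤ k < n`, `λ = n/(n-k)` and symplectic eigenvalues `s_α ≥ 1`, the sum of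
the single-mode relative entropies is at most `d · log((n - k/2)/(n - k))`. -/
theorem multimode_relative_entropy_de_finetti (d k n : ℕ) (hd : 1 ≤ d)
    (hk : 1 ≤ k) (hkn : k < n)
    (lam : ℝ) (hlam : lam = (n : ℝ) / ((n : ℝ) - k))
    (s : Fin d → ℝ) (hs : ∀ α, 1 ≤ s α) :
    ∑ α : Fin d, ∑' ℓ : ℕ, thermalEigenvalue (s α) ℓ *
        Real.log (thermalEigenvalue (s α) ℓ / thermalEigenvalue (lam * s α) ℓ)
      ≤ (d : ℝ) * Real.log (((n : ℝ) - (k : ℝ) / 2) / ((n : ℝ) - k)) :=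
  multimode_relative_entropy_de_finetti_general d k n hkn lam hlam s hs
end

section
/- Let d ≥ 1 and 1 ≤ k < n be integers and set λ := n/(n−k). Then for all s₁, …, s_d ≥ 1, with μ_ℓ(s) := 2(s−1)^ℓ/(s+1)^{ℓ+1} (convention 0^0 = 1), one has ∏_{α=1}^d Σ_{ℓ=0}^∞ √( μ_ℓ(s_α) · μ_ℓ(λ s_α) ) ≥ ( (n−k)/(n − k/2) )^{d/2}. In particular, for d = 1 and every s ≥ 1, Σ_ℓ √(μ_ℓ(s) μ_ℓ(λs)) ≥ √( 2/(λ+1) ), with equality at s = 1. -/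
open Real

theorem thermalEigenvalue_eq_mul_pow (s : ℝ) (ℓ : ℕ) :
    thermalEigenvalue s ℓ = 2 / (s + 1) * ((s - 1) / (s + 1)) ^ ℓ := by
  rw [thermalEigenvalue, div_pow, div_mul_div_comm, pow_succ']

theorem sqrt_thermalEigenvalue_mul {s t : ℝ} (hs : 1 ≤ s) (ht : 1 ≤ t) (ℓ : ℕ) :
    √(thermalEigenvalue s ℓ * thermalEigenvalue t ℓ) =
      2 / √((s + 1) * (t + 1)) * (√((s - 1) * (t - 1)) / √((s + 1) * (t + 1))) ^ ℓ := by
  have hP : 0 ≤ (s + 1) * (t + 1) := by nlinarith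
  have hQ : 0 ≤ (s - 1) * (t - 1) := by nlinarith
  rw [← sqrt_sq (by positivity : 0 ≤ 2 / √((s + 1) * (t + 1)) *
    (√((s - 1) * (t - 1)) / √((s + 1) * (t + 1))) ^ ℓ)]
  congr 1
  rw [mul_pow, ← pow_mul, mul_comm ℓ, pow_mul, div_pow, div_pow, sq_sqrt hP, sq_sqrt hQ,
    thermalEigenvalue_eq_mul_pow, thermalEigenvalue_eq_mul_pow, mul_div_mul_comm (s - 1), mul_pow,
    sq, ← div_mul_div_comm]
  ring

theorem tsum_sqrt_thermalEigenvalue_mul {s t : ℝ} (hs : 1 ≤ s) (ht : 1 ≤ t) :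
    ∑' ℓ, √(thermalEigenvalue s ℓ * thermalEigenvalue t ℓ) =
      2 / (√((s + 1) * (t + 1)) - √((s - 1) * (t - 1))) := by
  have hA : 0 < √((s + 1) * (t + 1)) := sqrt_pos.mpr (by nlinarith)
  have hBA : √((s - 1) * (t - 1)) < √((s + 1) * (t + 1)) :=
    sqrt_lt_sqrt (by nlinarith) (by nlinarith)
  simp_rw [sqrt_thermalEigenvalue_mul hs ht]
  rw [tsum_mul_left, tsum_geometric_of_lt_one (by positivity) ((div_lt_one hA).mpr hBA)]
  field_simp [sub_pos.mpr hBA]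

theorem tsum_sqrt_thermalEigenvalue_one_mul (t : ℝ) :
    ∑' ℓ, √(thermalEigenvalue 1 ℓ * thermalEigenvalue t ℓ) = √(2 / (t + 1)) := by
  rw [tsum_eq_single 0 fun ℓ hℓ => by simp [thermalEigenvalue, hℓ]]
  norm_num [thermalEigenvalue]

theorem two_div_sqrt_two_mul (u : ℝ) : 2 / √(2 * u) = √(2 / u) := by
  rw [show 2 / u = 2 ^ 2 / (2 * u) by ring, sqrt_div (by positivity), sqrt_sq zero_le_two]

theorem sqrt_sub_sqrt_le_sqrt_two_mul {lam s : ℝ} (hlam : 1 ≤ lam) (hs : 1 ≤ s) :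
    √((s + 1) * (lam * s + 1)) - √((s - 1) * (lam * s - 1)) ≤ √(2 * (lam + 1)) := by
  have hQ : 0 ≤ (s - 1) * (lam * s - 1) := mul_nonneg (by linarith) (by nlinarith)
  have hcross : (lam + 1) * (s - 1) ≤ √(2 * (lam + 1)) * √((s - 1) * (lam * s - 1)) := by
    rw [← sqrt_mul (by positivity)]
    have hgap : 0 ≤ (lam + 1) * (s - 1) * ((lam - 1) * (s + 1)) :=
      mul_nonneg (mul_nonneg (by linarith) (by linarith)) (mul_nonneg (by linarith) (by linarith))
    exact le_sqrt_of_sq_le (by linear_combination hgap)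
  rw [sub_le_iff_le_add, sqrt_le_left (by positivity), add_sq, sq_sqrt (by positivity),
    sq_sqrt hQ]
  linear_combination 2 * hcross

theorem sqrt_two_div_le_tsum_sqrt_thermalEigenvalue_mul {lam s : ℝ} (hlam : 1 ≤ lam)
    (hs : 1 ≤ s) :
    √(2 / (lam + 1)) ≤ ∑' ℓ, √(thermalEigenvalue s ℓ * thermalEigenvalue (lam * s) ℓ) := by
  have hgap : 0 < √((s + 1) * (lam * s + 1)) - √((s - 1) * (lam * s - 1)) :=
    sub_pos.mpr (sqrt_lt_sqrt (mul_nonneg (by linarith) (by nlinarith)) (by nlinarith))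
  rw [tsum_sqrt_thermalEigenvalue_mul hs (by nlinarith), ← two_div_sqrt_two_mul]
  exact div_le_div_of_nonneg_left zero_le_two hgap (sqrt_sub_sqrt_le_sqrt_two_mul hlam hs)

theorem multimode_fidelity_de_finetti_general (d k n : ℕ) (hkn : k < n)
    (lam : ℝ) (hlam : lam = (n : ℝ) / ((n : ℝ) - k))
    (s : Fin d → ℝ) (hs : ∀ α, 1 ≤ s α) :
    (∏ α : Fin d, ∑' ℓ : ℕ,
        Real.sqrt (thermalEigenvalue (s α) ℓ * thermalEigenvalue (lam * s α) ℓ)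
      ≥ (((n : ℝ) - k) / ((n : ℝ) - (k : ℝ) / 2)) ^ ((d : ℝ) / 2))
    ∧ (∀ t : ℝ, 1 ≤ t →
        (∑' ℓ : ℕ, Real.sqrt (thermalEigenvalue t ℓ * thermalEigenvalue (lam * t) ℓ)
            ≥ Real.sqrt (2 / (lam + 1)))
        ∧ (t = 1 →
          ∑' ℓ : ℕ, Real.sqrt (thermalEigenvalue t ℓ * thermalEigenvalue (lam * t) ℓ)
            = Real.sqrt (2 / (lam + 1)))) := by
  have hnk : (0 : ℝ) < n - k := sub_pos.mpr (Nat.cast_lt.mpr hkn)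
  have hlam_one : 1 ≤ lam := by
    rw [hlam, le_div_iff₀ hnk]
    linarith [(Nat.cast_nonneg k : (0 : ℝ) ≤ k)]
  have hratio : ((n : ℝ) - k) / (n - k / 2) = 2 / (lam + 1) := by
    have hnk2 : (0 : ℝ) < n - k / 2 := by linarith [(Nat.cast_nonneg k : (0 : ℝ) ≤ k)]
    rw [hlam, div_add_one hnk.ne', div_div_eq_mul_div, div_eq_div_iff hnk2.ne' (by positivity)]
    ring
  refine ⟨?_, fun t ht => ⟨sqrt_two_div_le_tsum_sqrt_thermalEigenvalue_mul hlam_one ht, ?_⟩⟩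
  · calc ∏ α, ∑' ℓ, √(thermalEigenvalue (s α) ℓ * thermalEigenvalue (lam * s α) ℓ)
        ≥ ∏ _α : Fin d, √(2 / (lam + 1)) :=
          Finset.prod_le_prod (fun _ _ => sqrt_nonneg _)
            fun α _ => sqrt_two_div_le_tsum_sqrt_thermalEigenvalue_mul hlam_one (hs α)
      _ = (((n : ℝ) - k) / ((n : ℝ) - (k : ℝ) / 2)) ^ ((d : ℝ) / 2) := by
          rw [hratio, rpow_div_two_eq_sqrt _ (by positivity), rpow_natCast, Finset.prod_const,
            Finset.card_univ, Fintype.card_fin]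
  · rintro rfl
    rw [mul_one, tsum_sqrt_thermalEigenvalue_one_mul]

/-- **fidelity multi-mode Gaussian de Finetti bound.**
For `d ≥ 1`, `1 ≤ k < n` and `λ = n/(n-k)`, the product over the `d` modes of the
Bhattacharyya coefficients is at least `((n-k)/(n-k/2))^{d/2}`; in particular for a single
mode, `Σ_ℓ √(μ_ℓ(s) μ_ℓ(λs)) ≥ √(2/(λ+1))` for every `s ≥ 1`, with equality at `s = 1`. -/
theorem multimode_fidelity_de_finetti (d k n : ℕ) (hd : 1 ≤ d)
    (hk : 1 ≤ k) (hkn : k < n)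
    (lam : ℝ) (hlam : lam = (n : ℝ) / ((n : ℝ) - k))
    (s : Fin d → ℝ) (hs : ∀ α, 1 ≤ s α) :
    (∏ α : Fin d, ∑' ℓ : ℕ,
        Real.sqrt (thermalEigenvalue (s α) ℓ * thermalEigenvalue (lam * s α) ℓ)
      ≥ (((n : ℝ) - k) / ((n : ℝ) - (k : ℝ) / 2)) ^ ((d : ℝ) / 2))
    ∧ (∀ t : ℝ, 1 ≤ t →
        (∑' ℓ : ℕ, Real.sqrt (thermalEigenvalue t ℓ * thermalEigenvalue (lam * t) ℓ)
            ≥ Real.sqrt (2 / (lam + 1)))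
        ∧ (t = 1 →
          ∑' ℓ : ℕ, Real.sqrt (thermalEigenvalue t ℓ * thermalEigenvalue (lam * t) ℓ)
            = Real.sqrt (2 / (lam + 1)))) :=
  multimode_fidelity_de_finetti_general d k n hkn lam hlam s hs
end
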